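/- PCA characterization: for Ỹ ∈ ℝ^{n×p} with SVD Ỹ = LDRᵀ where the diagonal of D is in descending order, and for q ≤ p, the matrix U consisting of the first q columns of R minimizes ∑_{i=1}^n ‖ỹᵢ − UUᵀỹᵢ‖₂² over all U ∈ ℝ^{p×q} with UᵀU = I_q, where ỹᵢᵀ is the i-th row of Ỹ. -/
import Mathlib

open Matrix

noncomputable def frobSq {m n : Type*} [Fintype m] [Fintype n]
    (A : Matrix m n ℝ) : ℝ := ∑ i, ∑ j, (A i j) ^ 2

private lemma frobSq_eq_trace {m n : Type*} [Fintype m] [Fintype n] (A : Matrix m n ℝ) :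
    frobSq A = (Aᵀ * A).trace := by
  simp only [frobSq, Matrix.trace, Matrix.diag, Matrix.mul_apply, Matrix.transpose_apply, sq]
  exact Finset.sum_comm

private lemma col_norm_le_one {p q : ℕ} (W : Matrix (Fin p) (Fin q) ℝ)
    (hW : Wᵀ * W = 1) (i : Fin p) : ∑ j, (W i j)^2 ≤ 1 := by
  set G := W * Wᵀ with hGdef
  have hG : G * G = G := by
    rw [hGdef, Matrix.mul_assoc W Wᵀ (W * Wᵀ), ← Matrix.mul_assoc Wᵀ W Wᵀ, hW, Matrix.one_mul]
  have hsym : ∀ a b, G a b = G b a := by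
    intro a b; simp [hGdef, Matrix.mul_apply, mul_comm]
  have h1 : G i i = ∑ j, (W i j)^2 := by simp [hGdef, Matrix.mul_apply, sq]
  have h2 : G i i = ∑ k, (G i k)^2 := by
    conv_lhs => rw [← hG]
    simp only [Matrix.mul_apply, sq]
    exact Finset.sum_congr rfl fun k _ => by rw [hsym k i]
  have hnn : 0 ≤ G i i := by rw [h1]; positivity
  have hle : (G i i)^2 ≤ G i i := by
    conv_rhs => rw [h2]
    exact Finset.single_le_sum (f := fun k => (G i k)^2) (fun k _ => sq_nonneg _)
      (Finset.mem_univ i)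
  rw [← h1]
  nlinarith

private lemma sum_mul_le (p q : ℕ) (hq : q ≤ p) (e c : Fin p → ℝ)
    (he0 : ∀ i, 0 ≤ e i) (hdesc : ∀ i j : Fin p, i ≤ j → e j ≤ e i)
    (hc0 : ∀ i, 0 ≤ c i) (hc1 : ∀ i, c i ≤ 1)
    (hcs : ∑ i, c i = (q : ℝ)) :
    ∑ i, e i * c i ≤ ∑ i, e i * (if (i : ℕ) < q then 1 else 0) := by
  set t : ℝ := if h : q < p then e ⟨q, h⟩ else 0 with ht
  have key : ∀ i : Fin p,
      e i * c i - e i * (if (i : ℕ) < q then 1 else 0) ≤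
        t * (c i - (if (i : ℕ) < q then 1 else 0)) := by
    intro i
    by_cases hi : (i : ℕ) < q
    · simp only [hi, if_pos]
      have hti : t ≤ e i := by
        rw [ht]
        split_ifs with h
        · exact hdesc i ⟨q, h⟩ (by simpa [Fin.le_def] using le_of_lt hi)
        · exact he0 i
      nlinarith [hc1 i]
    · simp only [hi, if_neg, not_false_iff]
      have hqp : q < p := lt_of_le_of_lt (not_lt.1 hi) i.isLt
      have hit : e i ≤ t := by
        rw [ht, dif_pos hqp]
        exact hdesc ⟨q, hqp⟩ i (by simpa [Fin.le_def] using (not_lt.1 hi))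
      nlinarith [hc0 i]
  have hsum := Finset.sum_le_sum (s := Finset.univ) (fun i _ => key i)
  have hchi : ∑ i : Fin p, (if (i : ℕ) < q then (1:ℝ) else 0) = q := by
    rw [Fin.sum_univ_eq_sum_range (fun i => if i < q then (1:ℝ) else 0)]
    rw [Finset.sum_boole]
    have : (Finset.range p).filter (fun i => i < q) = Finset.range q := by
      ext x; simp; omega
    rw [this, Finset.card_range]
  rw [Finset.sum_sub_distrib] at hsum
  rw [← Finset.mul_sum] at hsum
  rw [Finset.sum_sub_distrib, hcs, hchi, sub_self, mul_zero] at hsum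
  linarith

private lemma trace_diag_form {p q : ℕ} (e : Fin p → ℝ) (W : Matrix (Fin p) (Fin q) ℝ) :
    (Wᵀ * (Matrix.diagonal e * W)).trace = ∑ i, e i * ∑ j, (W i j)^2 := by
  simp only [Matrix.trace, Matrix.diag, Matrix.mul_apply, Matrix.transpose_apply,
    Matrix.diagonal_apply, Finset.sum_ite_eq, Finset.mem_univ, if_pos, ite_mul, zero_mul,
    Finset.mul_sum]
  rw [Finset.sum_comm]
  refine Finset.sum_congr rfl fun i _ => Finset.sum_congr rfl fun j _ => by ring

private lemma objective {n p q : ℕ}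
    (Y L : Matrix (Fin n) (Fin p) ℝ) (dvec : Fin p → ℝ)
    (R : Matrix (Fin p) (Fin p) ℝ) (hL : Lᵀ * L = 1)
    (hsvd : Y = L * Matrix.diagonal dvec * Rᵀ)
    (U : Matrix (Fin p) (Fin q) ℝ) (hU : Uᵀ * U = 1) :
    frobSq (Y - Y * (U * Uᵀ)) =
      (Yᵀ * Y).trace - ∑ i, (dvec i)^2 * ∑ j, ((Rᵀ * U) i j)^2 := by
  set P : Matrix (Fin p) (Fin p) ℝ := U * Uᵀ with hPdef
  have hPt : Pᵀ = P := by rw [hPdef, Matrix.transpose_mul, Matrix.transpose_transpose]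
  have hPP : P * P = P := by
    rw [hPdef, Matrix.mul_assoc U Uᵀ (U * Uᵀ), ← Matrix.mul_assoc Uᵀ U Uᵀ, hU, Matrix.one_mul]
  rw [frobSq_eq_trace]
  have hexp : (Y - Y * P)ᵀ * (Y - Y * P)
      = Yᵀ * Y - Yᵀ * (Y * P) - (Pᵀ * (Yᵀ * Y) - Pᵀ * (Yᵀ * (Y * P))) := by
    rw [Matrix.transpose_sub, Matrix.sub_mul, Matrix.mul_sub, Matrix.mul_sub,
      Matrix.transpose_mul, Matrix.mul_assoc, Matrix.mul_assoc]
  rw [hexp, Matrix.trace_sub, Matrix.trace_sub, Matrix.trace_sub, hPt]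
  have h3 : (P * (Yᵀ * (Y * P))).trace = (Yᵀ * (Y * P)).trace := by
    rw [Matrix.trace_mul_comm, Matrix.mul_assoc Yᵀ (Y * P) P, Matrix.mul_assoc Y P P, hPP]
  have h2 : (P * (Yᵀ * Y)).trace = (Yᵀ * (Y * P)).trace := by
    rw [Matrix.trace_mul_comm, Matrix.mul_assoc]
  rw [h3, h2]
  have hYtY : Yᵀ * Y = R * (Matrix.diagonal (fun i => dvec i ^ 2) * Rᵀ) := by
    rw [hsvd]
    simp only [Matrix.transpose_mul, Matrix.transpose_transpose, Matrix.diagonal_transpose,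
      Matrix.mul_assoc]
    rw [← Matrix.mul_assoc Lᵀ L (Matrix.diagonal dvec * Rᵀ), hL, Matrix.one_mul,
      ← Matrix.mul_assoc (Matrix.diagonal dvec) (Matrix.diagonal dvec) Rᵀ,
      Matrix.diagonal_mul_diagonal]
    congr 2
    funext i
    ring
  have h4 : (Yᵀ * (Y * P)).trace = ∑ i, (dvec i)^2 * ∑ j, ((Rᵀ * U) i j)^2 := by
    have e1 : Yᵀ * (Y * P) = ((Yᵀ * Y) * U) * Uᵀ := by
      rw [hPdef, ← Matrix.mul_assoc, ← Matrix.mul_assoc]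
    rw [e1, Matrix.trace_mul_comm]
    have e2 : Uᵀ * ((Yᵀ * Y) * U)
        = (Rᵀ * U)ᵀ * (Matrix.diagonal (fun i => dvec i ^ 2) * (Rᵀ * U)) := by
      rw [hYtY, Matrix.transpose_mul Rᵀ U, Matrix.transpose_transpose]
      simp only [Matrix.mul_assoc]
    rw [e2, trace_diag_form]
  rw [h4]
  ring

theorem stmt_13 (n p q : ℕ) (hq : q ≤ p)
    (Ytilde : Matrix (Fin n) (Fin p) ℝ)
    (L : Matrix (Fin n) (Fin p) ℝ) (dvec : Fin p → ℝ)
    (R : Matrix (Fin p) (Fin p) ℝ)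
    (hL : Lᵀ * L = 1)
    (hd_nonneg : ∀ i, 0 ≤ dvec i)
    (hd_desc : ∀ i j : Fin p, i ≤ j → dvec j ≤ dvec i)
    (hR : Rᵀ * R = 1) (hR' : R * Rᵀ = 1)
    (hsvd : Ytilde = L * Matrix.diagonal dvec * Rᵀ)
    (U0 : Matrix (Fin p) (Fin q) ℝ)
    (hU0 : U0 = Matrix.of fun i j => R i (Fin.castLE hq j)) :
    ∀ U : Matrix (Fin p) (Fin q) ℝ, Uᵀ * U = 1 →
      frobSq (Ytilde - Ytilde * (U0 * U0ᵀ)) ≤ frobSq (Ytilde - Ytilde * (U * Uᵀ)) := by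
  intro U hU
  have hWU : (Rᵀ * U)ᵀ * (Rᵀ * U) = 1 := by
    rw [Matrix.transpose_mul, Matrix.transpose_transpose, Matrix.mul_assoc,
      ← Matrix.mul_assoc R Rᵀ U, hR', Matrix.one_mul, hU]
  have hW0 : Rᵀ * U0 = Matrix.of fun i j => if i = Fin.castLE hq j then (1:ℝ) else 0 := by
    ext i j
    have h := congrFun (congrFun hR i) (Fin.castLE hq j)
    simp only [Matrix.mul_apply, Matrix.transpose_apply, Matrix.one_apply] at h
    simp only [Matrix.mul_apply, Matrix.transpose_apply, Matrix.of_apply, hU0]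
    exact h
  have hU0o : U0ᵀ * U0 = 1 := by
    ext j j'
    have h := congrFun (congrFun hR (Fin.castLE hq j)) (Fin.castLE hq j')
    simp only [Matrix.mul_apply, Matrix.transpose_apply, Matrix.one_apply] at h
    simp only [Matrix.mul_apply, Matrix.transpose_apply, Matrix.one_apply, hU0,
      Matrix.of_apply]
    rw [h]
    simp [Fin.castLE_inj]
  rw [objective Ytilde L dvec R hL hsvd U hU, objective Ytilde L dvec R hL hsvd U0 hU0o]
  have hchi : ∀ i : Fin p, ∑ j, ((Rᵀ * U0) i j)^2 = if (i:ℕ) < q then (1:ℝ) else 0 := by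
    intro i
    rw [hW0]
    simp only [Matrix.of_apply]
    by_cases hi : (i:ℕ) < q
    · rw [if_pos hi]
      have hiff : ∀ j : Fin q, (i = Fin.castLE hq j) ↔ (j = ⟨(i:ℕ), hi⟩) := by
        intro j
        constructor
        · intro h
          have hv := congrArg Fin.val h
          simp only [Fin.coe_castLE] at hv
          exact Fin.ext hv.symm
        · intro h
          subst h
          exact Fin.ext rfl
      calc ∑ j, (if i = Fin.castLE hq j then (1:ℝ) else 0)^2
          = ∑ j, (if j = (⟨(i:ℕ), hi⟩ : Fin q) then (1:ℝ) else 0) := by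
            refine Finset.sum_congr rfl fun j _ => ?_
            by_cases h : j = (⟨(i:ℕ), hi⟩ : Fin q)
            · rw [if_pos h, if_pos ((hiff j).2 h)]; norm_num
            · rw [if_neg h, if_neg (fun hh => h ((hiff j).1 hh))]; norm_num
        _ = 1 := by rw [Finset.sum_ite_eq' Finset.univ]; simp
    · rw [if_neg hi]
      apply Finset.sum_eq_zero
      intro j _
      rw [if_neg]
      · norm_num
      · intro h
        have hv := congrArg Fin.val h
        simp only [Fin.coe_castLE] at hv
        omega
  apply sub_le_sub_left
  have goal2 : ∑ i, dvec i ^ 2 * ∑ j, ((Rᵀ * U) i j)^2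
      ≤ ∑ i, dvec i ^ 2 * (if (i:ℕ) < q then (1:ℝ) else 0) := by
    apply sum_mul_le p q hq
    · intro i; positivity
    · intro i j hij
      exact pow_le_pow_left₀ (hd_nonneg j) (hd_desc i j hij) 2
    · intro i; positivity
    · intro i; exact col_norm_le_one (Rᵀ * U) hWU i
    · have htr : ∑ i, ∑ j, ((Rᵀ * U) i j)^2 = ((Rᵀ * U)ᵀ * (Rᵀ * U)).trace := by
        simp only [Matrix.trace, Matrix.diag, Matrix.mul_apply, Matrix.transpose_apply, sq]
        exact Finset.sum_comm
      rw [htr, hWU, Matrix.trace_one]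
      simp
  calc ∑ i, dvec i ^ 2 * ∑ j, ((Rᵀ * U) i j)^2
      ≤ ∑ i, dvec i ^ 2 * (if (i:ℕ) < q then (1:ℝ) else 0) := goal2
    _ = ∑ i, dvec i ^ 2 * ∑ j, ((Rᵀ * U0) i j)^2 := by
        exact Finset.sum_congr rfl fun i _ => by rw [hchi i]
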